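/- Let m ≥ 2, let L be a word over the alphabet {1,…,m}, and let t be the m-ary tree pattern whose word set is {L} (equivalently, the internal vertices of t form a path starting at the root with successive child-indices given by the letters of L, the last internal vertex on this path being an m-leaf parent). Then an m-ary tree T contains t if and only if L occurs as a contiguous factor of some word in the word set W(T), i.e., some word of W(T) equals p·L·s for (possibly empty) words p and s. -/

import Mathlib

inductive MTree (m : ℕ) : Type
  | leaf : MTree m
  | node : (Fin m → MTree m) → MTree m

namespace MTree

variable {m : ℕ}

/-- `occursAtRoot t T` : the pattern `t` occurs at the root of `T`. -/
def occursAtRoot : MTree m → MTree m → Prop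
  | .leaf, _ => True
  | .node _, .leaf => False
  | .node ps, .node cs => ∀ i, occursAtRoot (ps i) (cs i)

/-- `contains t T` : the pattern `t` occurs at some vertex of `T`. -/
def contains (t : MTree m) : MTree m → Prop
  | .leaf => occursAtRoot t .leaf
  | .node cs => occursAtRoot t (.node cs) ∨ ∃ i, contains t (cs i)

/-- `T.avoids t` : the tree `T` avoids the pattern `t`. -/
def avoids (T t : MTree m) : Prop := ¬ contains t T

/-- the number of leaves of an `m`-ary tree -/
def leaves : MTree m → ℕ
  | .leaf => 1
  | .node cs => ∑ i, leaves (cs i)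

/-- the `σ`-relabeling of an `m`-ary tree -/
def relabel (σ : Equiv.Perm (Fin m)) : MTree m → MTree m
  | .leaf => .leaf
  | .node cs => .node fun i => relabel σ (cs (σ i))

end MTree

namespace MTree

/-- the word set of an `m`-ary tree: the set of words over `{1,…,m}` recording
the child-indices along the path from the root to each `m`-leaf parent
(an internal vertex all of whose children are leaves) -/
def wordSet : MTree m → Set (List (Fin m))
  | .leaf => ∅
  | .node cs =>
      {w | (w = [] ∧ ∀ i, cs i = MTree.leaf) ∨
        ∃ i w', w = i :: w' ∧ w' ∈ wordSet (cs i)}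

/-- the `m`-ary tree pattern whose word set is `{L}`: its internal vertices
form a path from the root with successive child-indices given by the letters
of `L`, the last internal vertex being an `m`-leaf parent -/
def patOfWord : List (Fin m) → MTree m
  | [] => .node fun _ => .leaf
  | i :: w => .node fun j => if j = i then patOfWord w else .leaf

end MTree

/-!
The pattern `patOfWord L` occurs at a vertex `v` exactly when the path labelled `L` from `v`
stays among internal vertices and ends at an internal vertex. Since every nonleaf subtree
contains an `m`-leaf parent, this happens iff `v · L` is a prefix of a word of `W(T)`.
Ranging over all vertices `v` turns prefixes into factors.
-/

namespace MTree

variable {m : ℕ}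

theorem exists_mem_wordSet_node_iff (cs : Fin m → MTree m) (P : List (Fin m) → Prop) :
    (∃ w ∈ wordSet (node cs), P w) ↔
      (P [] ∧ ∀ i, cs i = leaf) ∨ ∃ i, ∃ w ∈ wordSet (cs i), P (i :: w) := by
  constructor
  · rintro ⟨w, ⟨rfl, hleaf⟩ | ⟨i, w, rfl, hw⟩, hP⟩
    · exact .inl ⟨hP, hleaf⟩
    · exact .inr ⟨i, w, hw, hP⟩
  · rintro (⟨hP, hleaf⟩ | ⟨i, w, hw, hP⟩)
    · exact ⟨[], .inl ⟨rfl, hleaf⟩, hP⟩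
    · exact ⟨i :: w, .inr ⟨i, w, rfl, hw⟩, hP⟩

theorem wordSet_nonempty_iff_ne_leaf (T : MTree m) : (wordSet T).Nonempty ↔ T ≠ leaf := by
  induction T with
  | leaf => simp [wordSet]
  | node cs ih =>
    simp only [ne_eq, reduceCtorEq, not_false_eq_true, iff_true]
    by_cases hleaf : ∀ i, cs i = leaf
    · exact ⟨[], .inl ⟨rfl, hleaf⟩⟩
    · obtain ⟨i, hi⟩ := not_forall.mp hleaf
      obtain ⟨w, hw⟩ := (ih i).mpr hi
      exact ⟨i :: w, .inr ⟨i, w, rfl, hw⟩⟩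

theorem occursAtRoot_patOfWord_iff (L : List (Fin m)) (T : MTree m) :
    occursAtRoot (patOfWord L) T ↔ ∃ w ∈ wordSet T, L <+: w := by
  induction L generalizing T with
  | nil =>
    cases T with
    | leaf => simp [patOfWord, occursAtRoot, wordSet]
    | node cs =>
      simp only [patOfWord, occursAtRoot, List.nil_prefix, and_true,
        implies_true, true_iff]
      exact (wordSet_nonempty_iff_ne_leaf (node cs)).mpr (by simp)
  | cons i L ih =>
    cases T with
    | leaf => simp [patOfWord, occursAtRoot, wordSet]
    | node cs =>
      have hroot : occursAtRoot (patOfWord (i :: L)) (node cs) ↔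
          occursAtRoot (patOfWord L) (cs i) := by
        simp only [patOfWord, occursAtRoot]
        refine ⟨fun h => by simpa using h i, fun h j => ?_⟩
        split_ifs with hj
        · exact hj ▸ h
        · trivial
      rw [hroot, ih, exists_mem_wordSet_node_iff]
      simp

theorem contains_patOfWord_iff_exists_infix (L : List (Fin m)) (T : MTree m) :
    contains (patOfWord L) T ↔ ∃ w ∈ wordSet T, L <:+: w := by
  induction T with
  | leaf => cases L <;> simp [contains, patOfWord, occursAtRoot, wordSet]
  | node cs ih =>
    simp only [contains, occursAtRoot_patOfWord_iff, ih, exists_mem_wordSet_node_iff,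
      List.infix_nil, List.prefix_nil, List.infix_cons_iff]
    grind

end MTree

theorem contains_patOfWord_iff_factor_general {m : ℕ}
    (L : List (Fin m)) (T : MTree m) :
    MTree.contains (MTree.patOfWord L) T ↔
      ∃ w ∈ MTree.wordSet T, ∃ p s : List (Fin m), w = p ++ L ++ s := by
  simp only [MTree.contains_patOfWord_iff_exists_infix, List.IsInfix, eq_comm]

/-- For `m ≥ 2`, an `m`-ary tree `T` contains the single-word pattern with
word set `{L}` if and only if `L` occurs as a contiguous factor of some word
in the word set of `T`. -/
theorem contains_patOfWord_iff_factor {m : ℕ} (hm : 2 ≤ m)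
    (L : List (Fin m)) (T : MTree m) :
    MTree.contains (MTree.patOfWord L) T ↔
      ∃ w ∈ MTree.wordSet T, ∃ p s : List (Fin m), w = p ++ L ++ s :=
  contains_patOfWord_iff_factor_general L T
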